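/- arXiv:2205.02391 — 2 statements merged into one kernel-verified Lean document; each statement's English description precedes it below -/
import Mathlib

section
/- Let F be a non-Archimedean local field with residue characteristic p ≠ 2, residue field of size q, and let ε be a uniformizer of F. Then the volume of the set {(x,y) ∈ F² : |x² - εy²| = 1} with respect to the product Haar measure giving O_F² volume 1 equals (q-1)/q. -/
/-!
Since `‖ε‖ = q⁻¹` and all norms are powers of `q`, the norms of `x²` and `εy²` are an even and
an odd power of `q` (or zero), so they never agree unless `y = 0`. The ultrametric inequality then
gives `‖x² - εy²‖ = max ‖x‖² (‖y‖² / q)`, and this equals `1` exactly when `x` is a unit and `y` is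
integral. The set is therefore `O_F^× × O_F`, of volume `(1 - q⁻¹) · 1`.
-/

open MeasureTheory

section

variable {F : Type*} [NormedField F] {q : ℝ}

lemma norm_le_zpow_of_lt_zpow_add_one (hq : 1 < q)
    (hval : ∀ x : F, x ≠ 0 → ∃ n : ℤ, ‖x‖ = q ^ n) {x : F} {n : ℤ}
    (hx : ‖x‖ < q ^ (n + 1)) : ‖x‖ ≤ q ^ n := by
  rcases eq_or_ne x 0 with rfl | hx0
  · simpa using zpow_nonneg (zero_le_one.trans hq.le) n
  obtain ⟨m, hm⟩ := hval x hx0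
  rw [hm] at hx ⊢
  have hmn : m < n + 1 := (zpow_lt_zpow_iff_right₀ hq).mp hx
  exact zpow_le_zpow_right₀ hq.le (by omega)

lemma norm_sq_ne_norm_sq_div (hq : 1 < q)
    (hval : ∀ x : F, x ≠ 0 → ∃ n : ℤ, ‖x‖ = q ^ n) (x : F) {y : F} (hy : y ≠ 0) :
    ‖x‖ ^ 2 ≠ ‖y‖ ^ 2 / q := by
  have hq0 : 0 < q := zero_lt_one.trans hq
  rcases eq_or_ne x 0 with rfl | hx
  · simpa using (div_pos (pow_pos (norm_pos_iff.mpr hy) 2) hq0).ne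
  obtain ⟨n, hn⟩ := hval x hx
  obtain ⟨m, hm⟩ := hval y hy
  rw [hn, hm, ← zpow_natCast, ← zpow_natCast, ← zpow_mul, ← zpow_mul, div_eq_mul_inv,
    ← zpow_sub_one₀ hq0.ne', Ne, zpow_right_inj₀ hq0 hq.ne']
  omega

lemma max_norm_sq_eq_one_iff (hq : 1 < q)
    (hval : ∀ x : F, x ≠ 0 → ∃ n : ℤ, ‖x‖ = q ^ n) {x y : F} :
    max (‖x‖ ^ 2) (‖y‖ ^ 2 / q) = 1 ↔ ‖x‖ = 1 ∧ ‖y‖ ≤ 1 := by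
  have hq0 : 0 < q := zero_lt_one.trans hq
  constructor
  · intro h
    have hy_ne : ‖y‖ ^ 2 / q ≠ 1 := by
      intro hy
      have hy0 : y ≠ 0 := by rintro rfl; simp at hy
      exact norm_sq_ne_norm_sq_div hq hval 1 hy0 (by simp [hy])
    have hy_lt : ‖y‖ ^ 2 / q < 1 := (le_max_right _ _).trans_eq h |>.lt_of_ne hy_ne
    have hx : ‖x‖ ^ 2 = 1 := by
      rcases max_eq_iff.mp h with ⟨hx, -⟩ | ⟨hy, -⟩
      exacts [hx, absurd hy hy_ne]
    refine ⟨(pow_eq_one_iff_of_nonneg (norm_nonneg x) two_ne_zero).mp hx, ?_⟩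
    have hyq : ‖y‖ < q := by
      rw [div_lt_one hq0] at hy_lt
      nlinarith [norm_nonneg y]
    simpa using norm_le_zpow_of_lt_zpow_add_one hq hval (n := 0) (by simpa using hyq)
  · rintro ⟨hx, hy⟩
    rw [hx, one_pow, max_eq_left ((div_le_one hq0).mpr (by nlinarith [norm_nonneg y]))]

lemma norm_sq_sub_mul_sq (hna : ∀ x y : F, ‖x + y‖ ≤ max ‖x‖ ‖y‖) (hq : 1 < q)
    (hval : ∀ x : F, x ≠ 0 → ∃ n : ℤ, ‖x‖ = q ^ n) {ε : F} (hε : ‖ε‖ = q⁻¹) (x y : F) :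
    ‖x ^ 2 - ε * y ^ 2‖ = max (‖x‖ ^ 2) (‖y‖ ^ 2 / q) := by
  have : IsUltrametricDist F :=
    IsUltrametricDist.isUltrametricDist_of_forall_norm_add_le_max_norm hna
  have hεy : ‖-(ε * y ^ 2)‖ = ‖y‖ ^ 2 / q := by
    rw [norm_neg, norm_mul, norm_pow, hε, inv_mul_eq_div]
  rcases eq_or_ne y 0 with rfl | hy
  · simp
  have hne : ‖x ^ 2‖ ≠ ‖-(ε * y ^ 2)‖ := by
    rw [norm_pow, hεy]
    exact norm_sq_ne_norm_sq_div hq hval x hy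
  rw [sub_eq_add_neg, IsUltrametricDist.norm_add_eq_max_of_norm_ne_norm hne, norm_pow, hεy]

lemma setOf_norm_sq_sub_mul_sq_eq_one (hna : ∀ x y : F, ‖x + y‖ ≤ max ‖x‖ ‖y‖) (hq : 1 < q)
    (hval : ∀ x : F, x ≠ 0 → ∃ n : ℤ, ‖x‖ = q ^ n) {ε : F} (hε : ‖ε‖ = q⁻¹) :
    {p : F × F | ‖p.1 ^ 2 - ε * p.2 ^ 2‖ = 1} = {x : F | ‖x‖ = 1} ×ˢ {y : F | ‖y‖ ≤ 1} := by
  ext ⟨x, y⟩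
  simp only [Set.mem_ofPred_eq, Set.mem_prod, norm_sq_sub_mul_sq hna hq hval hε,
    max_norm_sq_eq_one_iff hq hval]

lemma measure_norm_eq_one [MeasurableSpace F] [OpensMeasurableSpace F] {μ : Measure F}
    (hq : 1 < q) (hval : ∀ x : F, x ≠ 0 → ∃ n : ℤ, ‖x‖ = q ^ n)
    (hfin : μ {x : F | ‖x‖ ≤ q⁻¹} ≠ ⊤) :
    μ {x : F | ‖x‖ = 1} = μ {x : F | ‖x‖ ≤ 1} - μ {x : F | ‖x‖ ≤ q⁻¹} := by
  have hq_inv : q⁻¹ < 1 := inv_lt_one_of_one_lt₀ hq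
  have hsphere : {x : F | ‖x‖ = 1} = {x : F | ‖x‖ ≤ 1} \ {x : F | ‖x‖ ≤ q⁻¹} := by
    ext x
    simp only [Set.mem_ofPred_eq, Set.mem_sdiff, not_le]
    refine ⟨fun hx => ⟨hx.le, hx ▸ hq_inv⟩, fun ⟨hx, hx'⟩ => hx.eq_of_not_lt fun hlt => ?_⟩
    have := norm_le_zpow_of_lt_zpow_add_one hq hval (n := -1) (by simpa using hlt)
    exact (zpow_neg_one q ▸ this).not_gt hx'
  rw [hsphere]
  exact measure_sdiff (fun x (hx : ‖x‖ ≤ q⁻¹) => hx.trans hq_inv.le)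
    (measurableSet_le measurable_norm measurable_const).nullMeasurableSet hfin

lemma sigmaFinite_of_measure_norm_le_pow_ne_top {E : Type*} [SeminormedAddGroup E]
    [MeasurableSpace E] {μ : Measure E} (hq : 1 < q)
    (hfin : ∀ n : ℕ, μ {x : E | ‖x‖ ≤ q ^ n} ≠ ⊤) : SigmaFinite μ := by
  refine Measure.sigmaFinite_of_countable
    (Set.countable_range fun n : ℕ => {x : E | ‖x‖ ≤ q ^ n})
    (by rintro _ ⟨n, rfl⟩; exact (hfin n).lt_top) ?_
  refine Set.eq_univ_of_forall fun x => ?_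
  obtain ⟨n, hn⟩ := pow_unbounded_of_one_lt ‖x‖ hq
  exact Set.mem_sUnion.mpr ⟨_, ⟨n, rfl⟩, hn.le⟩

end

theorem volume_norm_one_set_ramified_general
    (F : Type*) [NormedField F] [MeasurableSpace F] [BorelSpace F]
    (hna : ∀ x y : F, ‖x + y‖ ≤ max ‖x‖ ‖y‖)
    (μ : Measure F)
    (q : ℕ) (hq : 1 < q)
    (hval : ∀ x : F, x ≠ 0 → ∃ n : ℤ, ‖x‖ = (q : ℝ) ^ n)
    (hball : ∀ n : ℤ, μ {x : F | ‖x‖ ≤ (q : ℝ) ^ (-n)} = (q : ENNReal) ^ (-n))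
    (ε : F) (hεunif : ‖ε‖ = ((q : ℝ))⁻¹) :
    (μ.prod μ) {p : F × F | ‖p.1 ^ 2 - ε * p.2 ^ 2‖ = 1}
      = ((q : ENNReal) - 1) / q := by
  have hq' : (1 : ℝ) < q := by exact_mod_cast hq
  have hq0 : (q : ENNReal) ≠ 0 := by exact_mod_cast (zero_lt_one.trans hq).ne'
  have hintegers : μ {x : F | ‖x‖ ≤ 1} = 1 := by simpa using hball 0
  have hideal : μ {x : F | ‖x‖ ≤ (q : ℝ)⁻¹} = (q : ENNReal)⁻¹ := by
    simpa [zpow_neg_one] using hball 1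
  have : SigmaFinite μ := sigmaFinite_of_measure_norm_le_pow_ne_top hq' fun n => by
    have h := hball (-n)
    simp only [neg_neg, zpow_natCast] at h
    simp [h]
  rw [setOf_norm_sq_sub_mul_sq_eq_one hna hq' hval hεunif, Measure.prod_prod,
    measure_norm_eq_one hq' hval (by simp [hideal, hq0]), hintegers, hideal, mul_one,
    ENNReal.sub_div fun _ _ => hq0, ENNReal.div_self hq0 (by simp), one_div]

/-- For a non-Archimedean local field `F` of residue characteristic `p ≠ 2`, residue
field of size `q`, and a uniformizer `ε`, the set `{(x,y) ∈ F² : |x² - εy²| = 1}` has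
volume `(q-1)/q` for the product Haar measure with `vol(O_F) = 1`. -/
theorem volume_norm_one_set_ramified
    (F : Type*) [NormedField F] [MeasurableSpace F] [BorelSpace F]
    (hna : ∀ x y : F, ‖x + y‖ ≤ max ‖x‖ ‖y‖)
    (μ : Measure F) [μ.IsAddLeftInvariant]
    (q : ℕ) (hq : 1 < q)
    (hval : ∀ x : F, x ≠ 0 → ∃ n : ℤ, ‖x‖ = (q : ℝ) ^ n)
    (hball : ∀ n : ℤ, μ {x : F | ‖x‖ ≤ (q : ℝ) ^ (-n)} = (q : ENNReal) ^ (-n))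
    (hp2 : ‖(2 : F)‖ = 1)
    (ε : F) (hεunif : ‖ε‖ = ((q : ℝ))⁻¹) :
    (μ.prod μ) {p : F × F | ‖p.1 ^ 2 - ε * p.2 ^ 2‖ = 1}
      = ((q : ENNReal) - 1) / q :=
  volume_norm_one_set_ramified_general F hna μ q hq hval hball ε hεunif
end

section
/- Let F be a non-Archimedean local field with odd residue characteristic and residue field of size q, and let ε be a uniformizer. Then ∫_F |1 - εt²|^{-1} |dt| = 2, where |dt| is the Haar measure giving O_F volume 1. -/
/-!
Since `‖ε‖ = q⁻¹` and all norms are powers of `q`, the norm of `ε t²` is never `1`, so the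
ultrametric inequality gives `‖1 - ε t²‖ = max 1 ‖ε t²‖`. The integrand is therefore `1` on the
unit ball (volume `1`) and `q^{-(2n+1)}` on the shell `‖t‖ = q^{n+1}` (volume `q^{n+1} - q^n`),
and the shells contribute `∑ₙ (1 - q⁻¹) q⁻ⁿ = 1`.
-/

open MeasureTheory Set ENNReal

lemma norm_one_sub_eq_max_of_norm_ne_one {R : Type*} [NormedRing R] [NormOneClass R]
    [IsUltrametricDist R] {x : R} (hx : ‖x‖ ≠ 1) : ‖1 - x‖ = max 1 ‖x‖ := by
  rw [sub_eq_add_neg,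
    IsUltrametricDist.norm_add_eq_max_of_norm_ne_norm (by simpa [eq_comm] using hx), norm_one,
    norm_neg]

lemma iUnion_Ioc_pow_succ {q : ℝ} (hq : 1 < q) :
    ⋃ n : ℕ, Ioc (q ^ n) (q ^ (n + 1)) = Ioi 1 := by
  ext x
  simp only [mem_iUnion, mem_Ioc, mem_Ioi]
  constructor
  · rintro ⟨n, hn, -⟩
    exact (one_le_pow₀ hq.le).trans_lt hn
  · intro hx
    obtain ⟨m, hm⟩ := exists_mem_Ioc_zpow (zero_lt_one.trans hx) hq
    have hm₀ : 0 ≤ m := by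
      by_contra! h
      have := hm.2.trans (zpow_le_one_of_nonpos₀ hq.le (by omega))
      linarith
    lift m to ℕ using hm₀
    exact ⟨m, by exact_mod_cast hm⟩

lemma zpow_eq_pow_succ_of_mem_Ioc {q : ℝ} (hq : 1 < q) {m : ℤ} {n : ℕ}
    (h : q ^ m ∈ Ioc (q ^ n) (q ^ (n + 1))) : q ^ m = q ^ (n + 1) := by
  rw [← zpow_natCast, ← zpow_natCast] at h
  obtain ⟨h₁, h₂⟩ := h
  have h₁ := (zpow_lt_zpow_iff_right₀ hq).1 h₁
  have h₂ := (zpow_le_zpow_iff_right₀ hq).1 h₂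
  rw [show m = (n + 1 : ℕ) by omega, zpow_natCast]

section Ultrametric

variable {K : Type*} [NormedField K] [IsUltrametricDist K] {ε t : K}

lemma norm_one_sub_mul_sq_of_norm_le_one (hε : ‖ε‖ < 1) (ht : ‖t‖ ≤ 1) :
    ‖1 - ε * t ^ 2‖ = 1 := by
  have hlt : ‖ε * t ^ 2‖ < 1 := by
    rw [norm_mul, norm_pow]
    exact mul_lt_one_of_nonneg_of_lt_one_left (norm_nonneg ε) hε (pow_le_one₀ (norm_nonneg t) ht)
  rw [norm_one_sub_eq_max_of_norm_ne_one hlt.ne, max_eq_left hlt.le]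

lemma norm_one_sub_mul_sq_of_norm_eq_pow {q : ℝ} (hq : 1 < q) (hε : ‖ε‖ = q⁻¹) {n : ℕ}
    (ht : ‖t‖ = q ^ (n + 1)) : ‖1 - ε * t ^ 2‖ = q ^ (2 * n + 1) := by
  have hnorm : ‖ε * t ^ 2‖ = q ^ (2 * n + 1) := by
    rw [norm_mul, norm_pow, hε, ht, ← pow_mul, show (n + 1) * 2 = (2 * n + 1) + 1 by ring,
      pow_succ', inv_mul_cancel_left₀ (zero_lt_one.trans hq).ne']
  have hgt : 1 < ‖ε * t ^ 2‖ := hnorm ▸ one_lt_pow₀ hq (by omega)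
  rw [norm_one_sub_eq_max_of_norm_ne_one hgt.ne', max_eq_right hgt.le, hnorm]

lemma norm_one_sub_mul_sq_of_norm_mem_Ioc {q : ℝ} (hq : 1 < q)
    (hval : ∀ x : K, x ≠ 0 → ∃ m : ℤ, ‖x‖ = q ^ m) (hε : ‖ε‖ = q⁻¹) {n : ℕ}
    (ht : ‖t‖ ∈ Ioc (q ^ n) (q ^ (n + 1))) : ‖1 - ε * t ^ 2‖ = q ^ (2 * n + 1) := by
  have ht₀ : t ≠ 0 := by
    rintro rfl
    exact (pow_pos (zero_lt_one.trans hq) n).not_ge (by simpa using ht.1.le)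
  obtain ⟨m, hm⟩ := hval t ht₀
  exact norm_one_sub_mul_sq_of_norm_eq_pow hq hε
    (hm.trans (zpow_eq_pow_succ_of_mem_Ioc hq (hm ▸ ht)))

end Ultrametric

section Shells

variable {E : Type*} [SeminormedAddCommGroup E] [MeasurableSpace E] [OpensMeasurableSpace E]
  (μ : Measure E)

lemma measurableSet_norm_le (a : ℝ) : MeasurableSet {x : E | ‖x‖ ≤ a} :=
  measurableSet_le continuous_norm.measurable measurable_const

lemma measurableSet_norm_mem_Ioc (a b : ℝ) : MeasurableSet {x : E | ‖x‖ ∈ Ioc a b} :=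
  measurableSet_Ioc.preimage continuous_norm.measurable

lemma measure_norm_mem_Ioc {a b : ℝ} (hab : a ≤ b) (ha : μ {x | ‖x‖ ≤ a} ≠ ∞) :
    μ {x | ‖x‖ ∈ Ioc a b} = μ {x | ‖x‖ ≤ b} - μ {x | ‖x‖ ≤ a} := by
  have hdiff : {x : E | ‖x‖ ∈ Ioc a b} = {x | ‖x‖ ≤ b} \ {x | ‖x‖ ≤ a} := by
    ext; simp [and_comm]
  rw [hdiff]
  exact measure_sdiff (fun x (hx : ‖x‖ ≤ a) ↦ hx.trans hab)
    (measurableSet_norm_le a).nullMeasurableSet ha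

lemma lintegral_eq_unitBall_add_tsum_shells (f : E → ℝ≥0∞) {q : ℝ} (hq : 1 < q) :
    ∫⁻ x, f x ∂μ = ∫⁻ x in {x | ‖x‖ ≤ 1}, f x ∂μ +
      ∑' n : ℕ, ∫⁻ x in {x | ‖x‖ ∈ Ioc (q ^ n) (q ^ (n + 1))}, f x ∂μ := by
  have hshells : {x : E | ‖x‖ ≤ 1}ᶜ = ⋃ n : ℕ, {x | ‖x‖ ∈ Ioc (q ^ n) (q ^ (n + 1))} := by
    ext x
    simp only [mem_compl_iff, mem_ofPred_eq, not_le, mem_iUnion]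
    rw [← mem_Ioi, ← iUnion_Ioc_pow_succ hq, mem_iUnion]
  have hdisj : Pairwise (Function.onFun Disjoint fun n : ℕ ↦ Ioc (q ^ n) (q ^ (n + 1))) := by
    simpa only [Order.succ_eq_add_one] using (pow_right_mono₀ hq.le).pairwise_disjoint_on_Ioc_succ
  rw [← lintegral_add_compl f (measurableSet_norm_le 1), hshells]
  exact congrArg _ (lintegral_iUnion (fun n ↦ measurableSet_norm_mem_Ioc _ _)
    (fun m n hmn ↦ (hdisj hmn).preimage norm) f)

end Shells

lemma ENNReal.inv_pow_two_mul_add_one_mul_pow_succ_sub_pow {Q : ℝ≥0∞} (hQ₀ : Q ≠ 0)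
    (hQ : Q ≠ ∞) (n : ℕ) : (Q ^ (2 * n + 1))⁻¹ * (Q ^ (n + 1) - Q ^ n) = (1 - Q⁻¹) * Q⁻¹ ^ n := by
  have hsub : Q ^ (n + 1) - Q ^ n = Q ^ (n + 1) * (1 - Q⁻¹) := by
    rw [ENNReal.mul_sub (fun _ _ ↦ pow_ne_top hQ), mul_one, pow_succ, mul_assoc,
      ENNReal.mul_inv_cancel hQ₀ hQ, mul_one]
  have hinv : (Q ^ (2 * n + 1))⁻¹ * Q ^ (n + 1) = Q⁻¹ ^ n := by
    rw [show 2 * n + 1 = n + (n + 1) by ring, pow_add,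
      ENNReal.mul_inv (by simp [hQ₀]) (by simp [hQ]), mul_assoc,
      ENNReal.inv_mul_cancel (pow_ne_zero _ hQ₀) (pow_ne_top hQ), mul_one, ENNReal.inv_pow]
  rw [hsub, ← mul_assoc, hinv, mul_comm]

lemma ENNReal.tsum_inv_pow_two_mul_add_one_mul_pow_succ_sub_pow {Q : ℝ≥0∞} (h₁ : 1 < Q)
    (hQ : Q ≠ ∞) : ∑' n : ℕ, (Q ^ (2 * n + 1))⁻¹ * (Q ^ (n + 1) - Q ^ n) = 1 := by
  have hpos : 1 - Q⁻¹ ≠ 0 := (tsub_pos_of_lt (ENNReal.inv_lt_one.2 h₁)).ne'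
  simp only [inv_pow_two_mul_add_one_mul_pow_succ_sub_pow (zero_lt_one.trans h₁).ne' hQ,
    ENNReal.tsum_mul_left, ENNReal.tsum_geometric]
  exact ENNReal.mul_inv_cancel hpos (ne_top_of_le_ne_top one_ne_top tsub_le_self)

theorem integral_inv_norm_one_sub_eps_t_sq_ramified_general
    (F : Type*) [NormedField F] [MeasurableSpace F] [BorelSpace F]
    (hna : ∀ x y : F, ‖x + y‖ ≤ max ‖x‖ ‖y‖)
    (μ : Measure F)
    (q : ℕ) (hq : 1 < q)
    (hval : ∀ x : F, x ≠ 0 → ∃ n : ℤ, ‖x‖ = (q : ℝ) ^ n)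
    (hball : ∀ n : ℤ, μ {x : F | ‖x‖ ≤ (q : ℝ) ^ (-n)} = (q : ENNReal) ^ (-n))
    (ε : F) (hεunif : ‖ε‖ = ((q : ℝ))⁻¹) :
    ∫⁻ t : F, (ENNReal.ofReal ‖1 - ε * t ^ 2‖)⁻¹ ∂μ = 2 := by
  have := IsUltrametricDist.isUltrametricDist_of_forall_norm_add_le_max_norm hna
  have hqR : (1 : ℝ) < q := by exact_mod_cast hq
  have hball_pow (n : ℕ) : μ {x : F | ‖x‖ ≤ (q : ℝ) ^ n} = (q : ℝ≥0∞) ^ n := by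
    simpa using hball (-n)
  have hunit : ∫⁻ t in {x : F | ‖x‖ ≤ 1}, (ENNReal.ofReal ‖1 - ε * t ^ 2‖)⁻¹ ∂μ = 1 := by
    rw [setLIntegral_congr_fun (measurableSet_norm_le 1) fun t ht ↦ by
        rw [norm_one_sub_mul_sq_of_norm_le_one (hεunif ▸ inv_lt_one_of_one_lt₀ hqR) ht,
          ENNReal.ofReal_one, inv_one],
      setLIntegral_one]
    simpa using hball_pow 0
  have hshells : ∑' n : ℕ, ∫⁻ t in {x : F | ‖x‖ ∈ Ioc ((q : ℝ) ^ n) ((q : ℝ) ^ (n + 1))},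
      (ENNReal.ofReal ‖1 - ε * t ^ 2‖)⁻¹ ∂μ = 1 := by
    rw [← ENNReal.tsum_inv_pow_two_mul_add_one_mul_pow_succ_sub_pow (Q := q)
      (by exact_mod_cast hq) (natCast_ne_top q)]
    refine tsum_congr fun n ↦ ?_
    rw [setLIntegral_congr_fun (measurableSet_norm_mem_Ioc _ _) fun t ht ↦ by
        rw [norm_one_sub_mul_sq_of_norm_mem_Ioc hqR hval hεunif ht,
          ENNReal.ofReal_pow (by positivity), ENNReal.ofReal_natCast],
      setLIntegral_const,
      measure_norm_mem_Ioc μ (pow_le_pow_right₀ hqR.le n.le_succ) (by simp [hball_pow]),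
      hball_pow, hball_pow]
  rw [lintegral_eq_unitBall_add_tsum_shells μ _ hqR, hunit, hshells, one_add_one_eq_two]

/-- For a non-Archimedean local field `F` of odd residue characteristic, residue field
of size `q`, and a uniformizer `ε`, one has `∫_F |1 - εt²|⁻¹ |dt| = 2`,
where `|dt|` gives `O_F` volume `1`. -/
theorem integral_inv_norm_one_sub_eps_t_sq_ramified
    (F : Type*) [NormedField F] [MeasurableSpace F] [BorelSpace F]
    (hna : ∀ x y : F, ‖x + y‖ ≤ max ‖x‖ ‖y‖)
    (μ : Measure F) [μ.IsAddLeftInvariant]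
    (q : ℕ) (hq : 1 < q)
    (hval : ∀ x : F, x ≠ 0 → ∃ n : ℤ, ‖x‖ = (q : ℝ) ^ n)
    (hball : ∀ n : ℤ, μ {x : F | ‖x‖ ≤ (q : ℝ) ^ (-n)} = (q : ENNReal) ^ (-n))
    (hp2 : ‖(2 : F)‖ = 1)
    (ε : F) (hεunif : ‖ε‖ = ((q : ℝ))⁻¹) :
    ∫⁻ t : F, (ENNReal.ofReal ‖1 - ε * t ^ 2‖)⁻¹ ∂μ = 2 :=
  integral_inv_norm_one_sub_eps_t_sq_ramified_general F hna μ q hq hval hball ε hεunif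
end
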